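/- arXiv:2012.03779 — 4 statements merged into one kernel-verified Lean document; each statement's English description precedes it below -/
import Mathlib

section
/- Let 𝒜 be an abelian category with enough projectives and injectives, and let 𝒳 be a full subcategory closed under extensions. Suppose 𝒲 ⊆ 𝒳 is a generator for 𝒳, i.e., for every X ∈ 𝒳 there is a short exact sequence 0 → X' → W → X → 0 with W ∈ 𝒲 and X' ∈ 𝒳. If there are short exact sequences 0 → N → X₁ → D → 0 and 0 → D → X₀ → M → 0 with X₀, X₁ ∈ 𝒳, then there exist short exact sequences 0 → N → X₁' → D' → 0 and 0 → D' → W₀ → M → 0 with W₀ ∈ 𝒲 and X₁' ∈ 𝒳. -/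
/-!
Cover `X₀` by an epimorphism `g : W₀ ⟶ X₀` with `W₀ ∈ 𝒲` and kernel `X' ∈ 𝒳`, and set
`D' := D ×_{X₀} W₀`. Then `D'` is the kernel of `W₀ ⟶ X₀ ⟶ M` and, as a base change of
`0 → X' → W₀ → X₀ → 0`, an extension of `D` by `X'`. Finally `X₁' := X₁ ×_D D'` is an
extension of `D'` by `N` (base change of `0 → N → X₁ → D → 0`) and an extension of `X₁`
by `X'` (base change of `0 → X' → D' → D → 0`), so `X₁' ∈ 𝒳`.
-/

open CategoryTheory CategoryTheory.Limits Opposite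

universe v u

variable {A : Type u} [Category.{v} A] [Abelian A]

/-- `IsSES f g` : `0 → X → Y → Z → 0` is a short exact sequence. -/
def IsSES {X Y Z : A} (f : X ⟶ Y) (g : Y ⟶ Z) : Prop :=
  ∃ w : f ≫ g = 0, (ShortComplex.mk f g w).ShortExact

/-- `HasCoresLE S n C` : `C` admits a coresolution `0 → C → X₀ → ⋯ → X₋ₙ → 0`
with all terms in `S`. -/
def HasCoresLE (S : Set A) : ℕ → A → Prop
  | 0, C => C ∈ S
  | n+1, C => ∃ (X K : A) (f : C ⟶ X) (g : X ⟶ K), X ∈ S ∧ IsSES f g ∧ HasCoresLE S n K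

/-- `S` is closed under extensions. -/
def ExtClosed (S : Set A) : Prop :=
  ∀ ⦃X Y Z : A⦄ (f : X ⟶ Y) (g : Y ⟶ Z), IsSES f g → X ∈ S → Z ∈ S → Y ∈ S

/-- `S` is closed under cokernels of monomorphisms. -/
def CokerClosed (S : Set A) : Prop :=
  ∀ ⦃X Y Z : A⦄ (f : X ⟶ Y) (g : Y ⟶ Z), IsSES f g → X ∈ S → Y ∈ S → Z ∈ S

/-- `S` is closed under kernels of epimorphisms. -/
def KerClosed (S : Set A) : Prop :=
  ∀ ⦃X Y Z : A⦄ (f : X ⟶ Y) (g : Y ⟶ Z), IsSES f g → Y ∈ S → Z ∈ S → X ∈ S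

/-- `W` is a generator for `X` : every object of `X` receives an epimorphism from
an object of `W` with kernel in `X`. -/
def IsGen (W X : Set A) : Prop :=
  W ⊆ X ∧ ∀ C ∈ X, ∃ (X' W₀ : A) (f : X' ⟶ W₀) (g : W₀ ⟶ C),
    W₀ ∈ W ∧ X' ∈ X ∧ IsSES f g

/-- `Extⁱ(X, Y) = 0`. -/
def ExtVanish [EnoughProjectives A] (i : ℕ) (X Y : A) : Prop :=
  IsZero (((Ext ℤ A i).obj (op X)).obj Y)

/-- `W` is `X`-projective: `Extⁱ(W, X) = 0` for all `i ≥ 1`. -/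
def IsXProj [EnoughProjectives A] (W X : Set A) : Prop :=
  ∀ W' ∈ W, ∀ X' ∈ X, ∀ i : ℕ, 1 ≤ i → ExtVanish i W' X'

namespace IsSES

lemma exists_of_isPullback {K Y Z Z' P : A} {k : K ⟶ Y} {g : Y ⟶ Z} {h : Z' ⟶ Z}
    {fst : P ⟶ Y} {snd : P ⟶ Z'} (sq : IsPullback fst snd g h) (hs : IsSES k g) :
    ∃ l : K ⟶ P, IsSES l snd := by
  obtain ⟨hkg, hse⟩ := hs
  have := hse.mono_f
  have := hse.epi_g
  let l : K ⟶ P := sq.lift k 0 (by simp [hkg])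
  have hl : l ≫ snd = 0 := sq.lift_snd _ _ _
  have : Mono l := mono_of_mono_fac (sq.lift_fst _ _ _)
  have : Epi snd := (MorphismProperty.epimorphisms A).of_isPullback sq ‹Epi g›
  have hker : IsLimit (KernelFork.ofι l hl) := by
    refine KernelFork.IsLimit.ofι' l hl fun {T} x hx => ?_
    have hxg : (x ≫ fst) ≫ g = 0 := by
      rw [Category.assoc, sq.w, ← Category.assoc, hx, zero_comp]
    refine ⟨hse.exact.lift _ hxg, sq.hom_ext ?_ ?_⟩
    · simpa [l] using hse.exact.lift_f _ hxg
    · simp [l, hx]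
  exact ⟨l, hl, ⟨ShortComplex.exact_of_f_is_kernel _ hker⟩⟩

lemma snd_comp_of_isPullback {D X₀ M W P : A} {c : D ⟶ X₀} {d : X₀ ⟶ M} {g : W ⟶ X₀}
    {fst : P ⟶ D} {snd : P ⟶ W} (sq : IsPullback fst snd c g) [Epi g] (hs : IsSES c d) :
    IsSES snd (g ≫ d) := by
  obtain ⟨hcd, hse⟩ := hs
  have := hse.mono_f
  have := hse.epi_g
  have hsnd : snd ≫ g ≫ d = 0 := by
    rw [← Category.assoc, ← sq.w, Category.assoc, hcd, comp_zero]
  have : Mono snd := (MorphismProperty.monomorphisms A).of_isPullback sq ‹Mono c›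
  have hker : IsLimit (KernelFork.ofι snd hsnd) := by
    refine KernelFork.IsLimit.ofι' snd hsnd fun {T} x hx => ?_
    have hxd : (x ≫ g) ≫ d = 0 := by rw [Category.assoc, hx]
    exact ⟨sq.lift (hse.exact.lift _ hxd) x (hse.exact.lift_f _ hxd), sq.lift_snd _ _ _⟩
  exact ⟨hsnd, ⟨ShortComplex.exact_of_f_is_kernel _ hker⟩⟩

end IsSES

theorem stmt0_general
    (𝒳 𝒲 : Set A) (hX : ExtClosed 𝒳) (hgen : IsGen 𝒲 𝒳)
    {N X₁ D X₀ M : A} (a : N ⟶ X₁) (b : X₁ ⟶ D) (c : D ⟶ X₀) (d : X₀ ⟶ M)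
    (h1 : IsSES a b) (h2 : IsSES c d) (hX1 : X₁ ∈ 𝒳) (hX0 : X₀ ∈ 𝒳) :
    ∃ (X₁' D' W₀ : A) (a' : N ⟶ X₁') (b' : X₁' ⟶ D') (c' : D' ⟶ W₀) (d' : W₀ ⟶ M),
      W₀ ∈ 𝒲 ∧ X₁' ∈ 𝒳 ∧ IsSES a' b' ∧ IsSES c' d' := by
  obtain ⟨X', W₀, f, g, hW₀, hX', hfg⟩ := hgen.2 X₀ hX0
  have : Epi g := hfg.2.epi_g
  have sqD := IsPullback.of_hasPullback c g
  have sqX₁ := IsPullback.of_hasPullback b (pullback.fst c g)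
  obtain ⟨l, hl⟩ := hfg.exists_of_isPullback sqD.flip
  obtain ⟨l', hl'⟩ := hl.exists_of_isPullback sqX₁.flip
  obtain ⟨a', ha'⟩ := h1.exists_of_isPullback sqX₁
  exact ⟨_, _, W₀, a', _, _, g ≫ d, hW₀, hX _ _ hl' hX' hX1, ha',
    h2.snd_comp_of_isPullback sqD⟩

/-- Lemma 3.4 of the paper, abelian version. -/
theorem stmt0 [EnoughProjectives A] [EnoughInjectives A]
    (𝒳 𝒲 : Set A) (hX : ExtClosed 𝒳) (hgen : IsGen 𝒲 𝒳)
    {N X₁ D X₀ M : A} (a : N ⟶ X₁) (b : X₁ ⟶ D) (c : D ⟶ X₀) (d : X₀ ⟶ M)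
    (h1 : IsSES a b) (h2 : IsSES c d) (hX1 : X₁ ∈ 𝒳) (hX0 : X₀ ∈ 𝒳) :
    ∃ (X₁' D' W₀ : A) (a' : N ⟶ X₁') (b' : X₁' ⟶ D') (c' : D' ⟶ W₀) (d' : W₀ ⟶ M),
      W₀ ∈ 𝒲 ∧ X₁' ∈ 𝒳 ∧ IsSES a' b' ∧ IsSES c' d' :=
  stmt0_general 𝒳 𝒲 hX hgen a b c d h1 h2 hX1 hX0
end

section
/- Let 𝒜 be an abelian category with enough projectives, 𝒳 an extension-closed full subcategory, and 𝒲 ⊆ 𝒳 a generator for 𝒳. For C ∈ 𝒳 and a nonnegative integer n, C admits a coresolution 0 → C → X₀ → X₋₁ → ⋯ → X₋ₙ → 0 with all X₋ᵢ ∈ 𝒳 if and only if C admits a coresolution 0 → C → X₀ → W₋₁ → ⋯ → W₋ₙ → 0 with X₀ ∈ 𝒳 and W₋ᵢ ∈ 𝒲 for 1 ≤ i ≤ n. -/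
open CategoryTheory CategoryTheory.Limits Opposite

universe v u

variable {A : Type u} [Category.{v} A] [Abelian A]

/-- Coresolutions of the mixed shape `0 → C → X₀ → W₋₁ → ⋯ → W₋ₙ → 0`
with `X₀ ∈ X` and all further terms in `W`. -/
def HasMixedCoresLE (X W : Set A) : ℕ → A → Prop
  | 0, C => C ∈ X
  | n+1, C => ∃ (X₀ K : A) (f : C ⟶ X₀) (g : X₀ ⟶ K), X₀ ∈ X ∧ IsSES f g ∧ HasCoresLE W n K


/-!
Induct on `n`. Given `0 → C → X₀ → K → 0` with `X₀ ∈ 𝒳`, where by induction `K` has a mixed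
coresolution of length `n`, first find `0 → N → M → K → 0` with `N ∈ 𝒳` and `M` having a
`𝒲`-coresolution of length `n`: for `n = 0` cover `K ∈ 𝒳` by the generator; otherwise, with
`0 → K → X₁ → K' → 0` the first step, cover `X₁` by `0 → N → W → X₁ → 0` and take
`M := K ×_{X₁} W`, which sits in `0 → M → W → K' → 0`. Then `P := X₀ ×_K M` sits in
`0 → C → P → M → 0` and in `0 → N → P → X₀ → 0`, so `P ∈ 𝒳` by extension closure.
The converse holds since `𝒲 ⊆ 𝒳`.
-/

namespace IsSES

variable {X Y Z : A} {f : X ⟶ Y} {g : Y ⟶ Z}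

lemma comp_eq_zero (h : IsSES f g) : f ≫ g = 0 := h.choose

lemma mono (h : IsSES f g) : Mono f := h.choose_spec.mono_f

lemma epi (h : IsSES f g) : Epi g := h.choose_spec.epi_g

lemma exists_lift (h : IsSES f g) {T : A} (t : T ⟶ Y) (ht : t ≫ g = 0) :
    ∃ u : T ⟶ X, u ≫ f = t :=
  have := h.mono
  ⟨h.choose_spec.exact.lift t ht, h.choose_spec.exact.lift_f t ht⟩

lemma of_isKernel (hfg : f ≫ g = 0) [Mono f] [Epi g]
    (hker : ∀ {T : A} (t : T ⟶ Y), t ≫ g = 0 → ∃ u : T ⟶ X, u ≫ f = t) : IsSES f g :=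
  ⟨hfg, .mk' (ShortComplex.exact_of_f_is_kernel _
    (KernelFork.IsLimit.ofι' _ _ fun t ht => ⟨_, (hker t ht).choose_spec⟩)) ‹_› ‹_›⟩

end IsSES

namespace CategoryTheory.IsPullback

variable {P X W Z : A} {fst : P ⟶ X} {snd : P ⟶ W} {q : X ⟶ Z} {p : W ⟶ Z}

lemma exists_isSES_fst (sq : IsPullback fst snd q p) {N : A} {k : N ⟶ W} (h : IsSES k p) :
    ∃ ℓ : N ⟶ P, IsSES ℓ fst := by
  have := h.epi
  have hk : (0 : N ⟶ X) ≫ q = k ≫ p := by rw [h.comp_eq_zero, zero_comp]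
  have : Mono (sq.lift 0 k hk) := have := h.mono; mono_of_mono_fac (sq.lift_snd 0 k hk)
  have : Epi fst := Abelian.epi_fst_of_isLimit q p sq.isLimit
  refine ⟨sq.lift 0 k hk, IsSES.of_isKernel (sq.lift_fst 0 k hk) fun t ht => ?_⟩
  obtain ⟨u, hu⟩ := h.exists_lift (t ≫ snd) <| by
    rw [Category.assoc, ← sq.w, ← Category.assoc, ht, zero_comp]
  exact ⟨u, sq.hom_ext (by simp [ht]) (by simp [hu])⟩

lemma isSES_snd (sq : IsPullback fst snd q p) {Q : A} {r : Z ⟶ Q} (h : IsSES q r) [Epi p] :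
    IsSES snd (p ≫ r) := by
  have := h.mono
  have := h.epi
  have := sq.mono_snd_of_mono
  refine IsSES.of_isKernel (by rw [← sq.w_assoc, h.comp_eq_zero, comp_zero]) fun t ht => ?_
  obtain ⟨u, hu⟩ := h.exists_lift (t ≫ p) (by rwa [Category.assoc])
  exact ⟨sq.lift u t hu, sq.lift_snd u t hu⟩

end CategoryTheory.IsPullback

section

variable {𝒳 𝒲 : Set A}

lemma ExtClosed.exists_isSES_of_cover (hX : ExtClosed 𝒳) {D X₀ K N M : A}
    {f : D ⟶ X₀} {g : X₀ ⟶ K} {k : N ⟶ M} {π : M ⟶ K} (hfg : IsSES f g) (hkπ : IsSES k π)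
    (hX₀ : X₀ ∈ 𝒳) (hN : N ∈ 𝒳) :
    ∃ (P : A) (f' : D ⟶ P) (g' : P ⟶ M), P ∈ 𝒳 ∧ IsSES f' g' := by
  have sq := IsPullback.of_hasPullback π g
  obtain ⟨ℓ, hD⟩ := sq.exists_isSES_fst hfg
  obtain ⟨_, hN'⟩ := sq.flip.exists_isSES_fst hkπ
  exact ⟨pullback π g, ℓ, pullback.fst π g, hX _ _ hN' hN hX₀, hD⟩

lemma HasCoresLE.mono (h𝒲 : 𝒲 ⊆ 𝒳) :
    ∀ {n : ℕ} {C : A}, HasCoresLE 𝒲 n C → HasCoresLE 𝒳 n C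
  | 0, _, hC => h𝒲 hC
  | _ + 1, _, ⟨X, K, f, g, hX, hfg, hK⟩ => ⟨X, K, f, g, h𝒲 hX, hfg, hK.mono h𝒲⟩

lemma HasMixedCoresLE.hasCoresLE (h𝒲 : 𝒲 ⊆ 𝒳) :
    ∀ {n : ℕ} {C : A}, HasMixedCoresLE 𝒳 𝒲 n C → HasCoresLE 𝒳 n C
  | 0, _, hC => hC
  | _ + 1, _, ⟨X₀, K, f, g, hX₀, hfg, hK⟩ => ⟨X₀, K, f, g, hX₀, hfg, hK.mono h𝒲⟩

lemma HasMixedCoresLE.exists_isSES_hasCoresLE (hgen : IsGen 𝒲 𝒳) :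
    ∀ {n : ℕ} {K : A}, HasMixedCoresLE 𝒳 𝒲 n K →
      ∃ (N M : A) (k : N ⟶ M) (π : M ⟶ K), N ∈ 𝒳 ∧ IsSES k π ∧ HasCoresLE 𝒲 n M
  | 0, K, hK => by
    obtain ⟨N, W, k, π, hW, hN, hkπ⟩ := hgen.2 K hK
    exact ⟨N, W, k, π, hN, hkπ, hW⟩
  | _ + 1, K, ⟨X₁, K', i, r, hX₁, hir, hK'⟩ => by
    obtain ⟨N, W, k, p, hW, hN, hkp⟩ := hgen.2 X₁ hX₁
    have := hkp.epi
    have sq := IsPullback.of_hasPullback i p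
    obtain ⟨ℓ, hN'⟩ := sq.exists_isSES_fst hkp
    exact ⟨N, pullback i p, ℓ, pullback.fst i p, hN, hN',
      ⟨W, K', pullback.snd i p, p ≫ r, hW, sq.isSES_snd hir, hK'⟩⟩

lemma HasCoresLE.hasMixedCoresLE (hX : ExtClosed 𝒳) (hgen : IsGen 𝒲 𝒳) :
    ∀ {n : ℕ} {C : A}, HasCoresLE 𝒳 n C → HasMixedCoresLE 𝒳 𝒲 n C
  | 0, _, hC => hC
  | _ + 1, _, ⟨X₀, K, f, g, hX₀, hfg, hK⟩ => by
    obtain ⟨N, M, k, π, hN, hkπ, hM⟩ :=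
      (hK.hasMixedCoresLE hX hgen).exists_isSES_hasCoresLE hgen
    obtain ⟨P, f', g', hP, hf'g'⟩ := hX.exists_isSES_of_cover hfg hkπ hX₀ hN
    exact ⟨P, M, f', g', hP, hf'g', hM⟩

end

theorem stmt1_general
    (𝒳 𝒲 : Set A) (hX : ExtClosed 𝒳) (hgen : IsGen 𝒲 𝒳)
    (C : A) (n : ℕ) :
    HasCoresLE 𝒳 n C ↔ HasMixedCoresLE 𝒳 𝒲 n C :=
  ⟨HasCoresLE.hasMixedCoresLE hX hgen, HasMixedCoresLE.hasCoresLE hgen.1⟩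

/-- Lemma 3.5 of the paper, abelian version. -/
theorem stmt1 [EnoughProjectives A]
    (𝒳 𝒲 : Set A) (hX : ExtClosed 𝒳) (hgen : IsGen 𝒲 𝒳)
    (C : A) (hC : C ∈ 𝒳) (n : ℕ) :
    HasCoresLE 𝒳 n C ↔ HasMixedCoresLE 𝒳 𝒲 n C :=
  stmt1_general 𝒳 𝒲 hX hgen C n
end

section
/- Let 𝒜 be an abelian category, 𝒳 extension-closed, and 𝒲 an 𝒳-projective generator for 𝒳. Then 𝒲 = 𝒳 ∩ ⊥𝒳, where ⊥𝒳 = {Y : Extⁱ(Y, X) = 0 for all X ∈ 𝒳, i ≥ 1}. -/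
open CategoryTheory CategoryTheory.Limits Opposite

universe v u

variable {A : Type u} [Category.{v} A] [Abelian A]

/-!
An object `Y ∈ 𝒳` with `Ext¹(Y, 𝒳) = 0` is covered by some `0 → X' → W → Y → 0` with `W ∈ 𝒲`
and `X' ∈ 𝒳`; the class of this extension lies in `Ext¹(Y, X') = 0`, so the sequence splits and
`Y` is a direct summand of `W`. The section is built on a projective resolution `P → Y`: lift
`P₀ → Y` through `W`, then use `Ext¹(Y, X') = 0` to correct the lift so that it factors through `Y`.
-/

namespace CategoryTheory.ProjectiveResolution

variable {X : A} (P : ProjectiveResolution X)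

lemma exists_d_comp_eq_of_d_comp_eq_zero [EnoughProjectives A] {Y : A} {n : ℕ}
    (hvan : ExtVanish (n + 1) X Y) (α : P.complex.X (n + 1) ⟶ Y)
    (hα : P.complex.d (n + 2) (n + 1) ≫ α = 0) :
    ∃ β : P.complex.X n ⟶ Y, P.complex.d (n + 1) n ≫ β = α := by
  have hexact : (P.complex.linearYonedaObj ℤ Y).ExactAt (n + 1) :=
    (HomologicalComplex.exactAt_iff_isZero_homology _ _).2 (hvan.of_iso (P.isoExt _ Y).symm)
  rw [HomologicalComplex.exactAt_iff' _ n (n + 1) (n + 2) (by simp) (by simp),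
    ShortComplex.moduleCat_exact_iff] at hexact
  exact hexact α hα

end CategoryTheory.ProjectiveResolution

lemma IsSES.exists_section_of_extVanish [EnoughProjectives A] {X' W X : A} {f : X' ⟶ W}
    {g : W ⟶ X} (hses : IsSES f g) (hvan : ExtVanish 1 X X') : ∃ σ : X ⟶ W, σ ≫ g = 𝟙 X := by
  obtain ⟨hfg, hS⟩ := hses
  have := hS.mono_f
  have := hS.epi_g
  let P : ProjectiveResolution X := (HasProjectiveResolution.out (Z := X)).some
  obtain ⟨π₀, hπ₀⟩ : ∃ π₀ : P.complex.X 0 ⟶ W, π₀ ≫ g = P.π.f 0 :=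
    ⟨Projective.factorThru _ g, Projective.factorThru_comp _ _⟩
  let α : P.complex.X 1 ⟶ X' := hS.exact.lift (P.complex.d 1 0 ≫ π₀)
    (by rw [Category.assoc, hπ₀]; exact P.complex_d_comp_π_f_zero)
  have hα : α ≫ f = P.complex.d 1 0 ≫ π₀ := hS.exact.lift_f _ _
  have hcocycle : P.complex.d 2 1 ≫ α = 0 := by
    rw [← cancel_mono f, Category.assoc, hα, P.complex.d_comp_d_assoc, zero_comp, zero_comp]
  obtain ⟨β, hβ⟩ := P.exists_d_comp_eq_of_d_comp_eq_zero hvan α hcocycle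
  -- correcting `π₀` by the coboundary `β ≫ f` makes it vanish on `d₁`, so it descends to `X`
  have hd : P.complex.d 1 0 ≫ (π₀ - β ≫ f) = 0 := by
    rw [Preadditive.comp_sub, reassoc_of% hβ, hα, sub_self]
  let σ : X ⟶ W := Cofork.IsColimit.desc P.isColimitCokernelCofork (π₀ - β ≫ f)
    (by rw [hd, zero_comp])
  have hσ : P.π.f 0 ≫ σ = π₀ - β ≫ f := Cofork.IsColimit.π_desc' P.isColimitCokernelCofork _ _
  refine ⟨σ, (cancel_epi (P.π.f 0)).1 ((Category.assoc _ _ _).symm.trans ?_)⟩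
  rw [hσ, Preadditive.sub_comp, hπ₀, Category.assoc, hfg, comp_zero]
  exact (sub_zero _).trans (Category.comp_id _).symm

theorem stmt8_general [EnoughProjectives A]
    (𝒳 𝒲 : Set A) (hgen : IsGen 𝒲 𝒳) (hproj : IsXProj 𝒲 𝒳)
    (hWretract : ∀ ⦃X Y : A⦄ (r : X ⟶ Y) (s : Y ⟶ X), s ≫ r = 𝟙 Y → X ∈ 𝒲 → Y ∈ 𝒲) :
    𝒲 = 𝒳 ∩ {Y : A | ∀ i : ℕ, 1 ≤ i → ∀ Z ∈ 𝒳, ExtVanish i Y Z} := by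
  refine Set.Subset.antisymm (fun W hW ↦ ⟨hgen.1 hW, fun i hi Z hZ ↦ hproj W hW Z hZ i hi⟩) ?_
  rintro X ⟨hX, hvan⟩
  obtain ⟨X', W, f, g, hW, hX', hses⟩ := hgen.2 X hX
  obtain ⟨σ, hσ⟩ := hses.exists_section_of_extVanish (hvan 1 le_rfl X' hX')
  exact hWretract g σ hσ hW

/-- Proposition 4.2(2), abelian version. -/
theorem stmt8 [EnoughProjectives A] [EnoughInjectives A]
    (𝒳 𝒲 : Set A) (hX : ExtClosed 𝒳) (hgen : IsGen 𝒲 𝒳) (hproj : IsXProj 𝒲 𝒳)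
    (hWiso : ∀ ⦃X Y : A⦄, (X ≅ Y) → X ∈ 𝒲 → Y ∈ 𝒲)
    (hWretract : ∀ ⦃X Y : A⦄ (r : X ⟶ Y) (s : Y ⟶ X), s ≫ r = 𝟙 Y → X ∈ 𝒲 → Y ∈ 𝒲) :
    𝒲 = 𝒳 ∩ {Y : A | ∀ i : ℕ, 1 ≤ i → ∀ Z ∈ 𝒳, ExtVanish i Y Z} :=
  stmt8_general 𝒳 𝒲 hgen hproj hWretract
end

section
/- Let 𝒞 be the category of cochain complexes over an abelian category 𝒜 equipped with the degreewise-split exact structure. Then 𝒞 is a Frobenius exact category: it has enough projectives and injectives with respect to degreewise-split short exact sequences, and the projective objects coincide with the injective objects, both being exactly the contractible complexes. -/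
/-!
A degreewise section `s` of `g : Y ⟶ Z` turns a null-homotopy `H` of `h : P ⟶ Z` into the
`(-1)`-cochain `H ≫ s`, whose coboundary is a chain map lifting `h`, since
`δ (H ≫ s) ≫ g = δ H = h`; dually, a degreewise retraction extends null-homotopic maps. Hence
contractible complexes are relatively projective and injective. The cone of `𝟙 X` is contractible
and sits in the degreewise split sequence `X ⟶ cone (𝟙 X) ⟶ X⟦1⟧`, which gives enough injectives
and, applied to `X⟦-1⟧`, enough projectives. A relatively projective (injective) complex is a
retract of the middle term of such a sequence, hence contractible.
-/

open CategoryTheory CategoryTheory.Limits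

universe v u

variable {A : Type u} [Category.{v} A] [Abelian A]

/-- A degreewise split short exact sequence of cochain complexes:
in each degree, `Y n` is a biproduct of `X n` and `Z n` via `f`, `g` and the
chosen (degreewise) retraction and section. -/
def DegSplitSES {X Y Z : CochainComplex A ℤ} (f : X ⟶ Y) (g : Y ⟶ Z) : Prop :=
  f ≫ g = 0 ∧ ∀ n : ℤ, ∃ (r : Y.X n ⟶ X.X n) (s : Z.X n ⟶ Y.X n),
    f.f n ≫ r = 𝟙 (X.X n) ∧ s ≫ g.f n = 𝟙 (Z.X n) ∧
      r ≫ f.f n + g.f n ≫ s = 𝟙 (Y.X n)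

/-- Projective with respect to the degreewise split exact structure. -/
def RelProj (P : CochainComplex A ℤ) : Prop :=
  ∀ ⦃X Y Z : CochainComplex A ℤ⦄ (f : X ⟶ Y) (g : Y ⟶ Z), DegSplitSES f g →
    ∀ h : P ⟶ Z, ∃ k : P ⟶ Y, k ≫ g = h

/-- Injective with respect to the degreewise split exact structure. -/
def RelInj (I : CochainComplex A ℤ) : Prop :=
  ∀ ⦃X Y Z : CochainComplex A ℤ⦄ (f : X ⟶ Y) (g : Y ⟶ Z), DegSplitSES f g →
    ∀ h : X ⟶ I, ∃ k : Y ⟶ I, f ≫ k = h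

/-- A complex is contractible if its identity is null-homotopic. -/
def Contractible (X : CochainComplex A ℤ) : Prop :=
  Nonempty (Homotopy (𝟙 X) (0 : X ⟶ X))

open CochainComplex HomComplex

section

variable {C : Type*} [Category* C] [Preadditive C]

lemma exists_lift_of_homotopy_zero {P Y Z : CochainComplex C ℤ} {g : Y ⟶ Z}
    (s : Cochain Z Y 0) (hs : s.comp (Cochain.ofHom g) (zero_add 0) = Cochain.ofHom (𝟙 Z))
    {h : P ⟶ Z} (H : Homotopy h 0) : ∃ k : P ⟶ Y, k ≫ g = h := by
  let γ : Cochain P Y (-1) := (Cochain.ofHomotopy H).comp s (add_zero _)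
  refine ⟨Cocycle.homOf (Cocycle.mk (δ (-1) 0 γ) 1 (by norm_num) (δ_δ _ _ _ _)), ?_⟩
  apply Cochain.ofHom_injective
  rw [Cochain.ofHom_comp, Cocycle.cochain_ofHom_homOf_eq_coe, Cocycle.mk_coe, ← δ_comp_ofHom,
    Cochain.comp_assoc_of_third_is_zero_cochain, hs, Cochain.comp_id, δ_ofHomotopy,
    Cochain.ofHom_zero, sub_zero]

lemma exists_extend_of_homotopy_zero {X Y I : CochainComplex C ℤ} {f : X ⟶ Y}
    (r : Cochain Y X 0) (hr : (Cochain.ofHom f).comp r (zero_add 0) = Cochain.ofHom (𝟙 X))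
    {h : X ⟶ I} (H : Homotopy h 0) : ∃ k : Y ⟶ I, f ≫ k = h := by
  let γ : Cochain Y I (-1) := r.comp (Cochain.ofHomotopy H) (zero_add _)
  refine ⟨Cocycle.homOf (Cocycle.mk (δ (-1) 0 γ) 1 (by norm_num) (δ_δ _ _ _ _)), ?_⟩
  apply Cochain.ofHom_injective
  rw [Cochain.ofHom_comp, Cocycle.cochain_ofHom_homOf_eq_coe, Cocycle.mk_coe, ← δ_ofHom_comp,
    ← Cochain.comp_assoc_of_first_is_zero_cochain, hr, Cochain.id_comp, δ_ofHomotopy,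
    Cochain.ofHom_zero, sub_zero]

end

lemma degSplitSES_of_splitting (S : ShortComplex (CochainComplex A ℤ))
    (σ : ∀ n, (S.map (HomologicalComplex.eval A (ComplexShape.up ℤ) n)).Splitting) :
    DegSplitSES S.f S.g :=
  ⟨S.zero, fun n => ⟨(σ n).r, (σ n).s, (σ n).f_r, (σ n).s_g, (σ n).id⟩⟩

lemma degSplitSES_inr_triangle_mor₃ {K L : CochainComplex A ℤ} (φ : K ⟶ L) :
    DegSplitSES (mappingCone.inr φ) (mappingCone.triangle φ).mor₃ :=
  degSplitSES_of_splitting _ (mappingCone.triangleRotateShortComplexSplitting φ)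

lemma DegSplitSES.comp_iso {X Y Z Z' : CochainComplex A ℤ} {f : X ⟶ Y} {g : Y ⟶ Z}
    (h : DegSplitSES f g) (e : Z ≅ Z') : DegSplitSES f (g ≫ e.hom) := by
  obtain ⟨hfg, hsplit⟩ := h
  refine ⟨by rw [reassoc_of% hfg, zero_comp], fun n => ?_⟩
  obtain ⟨r, s, hr, hs, hrs⟩ := hsplit n
  refine ⟨r, e.inv.f n ≫ s, hr, ?_, ?_⟩
  · simp [reassoc_of% hs]
  · have he := ((HomologicalComplex.eval A _ n).mapIso e).hom_inv_id
    simpa [reassoc_of% he] using hrs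

lemma DegSplitSES.exists_section {X Y Z : CochainComplex A ℤ} {f : X ⟶ Y} {g : Y ⟶ Z}
    (h : DegSplitSES f g) :
    ∃ s : Cochain Z Y 0, s.comp (Cochain.ofHom g) (zero_add 0) = Cochain.ofHom (𝟙 Z) := by
  choose _ s _ hs _ using h.2
  exact ⟨Cochain.ofHoms s, by ext n; simp [hs]⟩

lemma DegSplitSES.exists_retraction {X Y Z : CochainComplex A ℤ} {f : X ⟶ Y} {g : Y ⟶ Z}
    (h : DegSplitSES f g) :
    ∃ r : Cochain Y X 0, (Cochain.ofHom f).comp r (zero_add 0) = Cochain.ofHom (𝟙 X) := by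
  choose r _ hr _ _ using h.2
  exact ⟨Cochain.ofHoms r, by ext n; simp [hr]⟩

lemma contractible_mappingCone_id (X : CochainComplex A ℤ) :
    Contractible (mappingCone (𝟙 X)) :=
  ⟨mappingCone.homotopyToZeroOfId X⟩

lemma Contractible.of_retract {P Q : CochainComplex A ℤ} (u : P ⟶ Q) (v : Q ⟶ P)
    (huv : u ≫ v = 𝟙 P) (hQ : Contractible Q) : Contractible P := by
  obtain ⟨H⟩ := hQ
  exact ⟨(Homotopy.ofEq (by simp [← huv])).trans
    (((H.compLeft u).compRight v).trans (Homotopy.ofEq (by simp)))⟩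

lemma relProj_of_contractible {P : CochainComplex A ℤ} (hP : Contractible P) : RelProj P := by
  obtain ⟨H⟩ := hP
  intro X Y Z f g hfg h
  obtain ⟨s, hs⟩ := hfg.exists_section
  exact exists_lift_of_homotopy_zero s hs <| (Homotopy.ofEq (Category.id_comp h).symm).trans
    ((H.compRight h).trans (Homotopy.ofEq zero_comp))

lemma relInj_of_contractible {I : CochainComplex A ℤ} (hI : Contractible I) : RelInj I := by
  obtain ⟨H⟩ := hI
  intro X Y Z f g hfg h
  obtain ⟨r, hr⟩ := hfg.exists_retraction
  exact exists_extend_of_homotopy_zero r hr <| (Homotopy.ofEq (Category.comp_id h).symm).trans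
    ((H.compLeft h).trans (Homotopy.ofEq comp_zero))

lemma exists_degSplitSES_into_contractible (X : CochainComplex A ℤ) :
    ∃ (I K : CochainComplex A ℤ) (f : X ⟶ I) (g : I ⟶ K),
      Contractible I ∧ DegSplitSES f g :=
  ⟨_, _, _, _, contractible_mappingCone_id X, degSplitSES_inr_triangle_mor₃ (𝟙 X)⟩

lemma exists_degSplitSES_from_contractible (X : CochainComplex A ℤ) :
    ∃ (K P : CochainComplex A ℤ) (f : K ⟶ P) (g : P ⟶ X),
      Contractible P ∧ DegSplitSES f g :=
  ⟨_, _, _, _, contractible_mappingCone_id _,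
    (degSplitSES_inr_triangle_mor₃ (𝟙 (X⟦(-1 : ℤ)⟧))).comp_iso
      ((shiftFunctorCompIsoId _ (-1 : ℤ) 1 (by norm_num)).app X)⟩

lemma relProj_iff_contractible (P : CochainComplex A ℤ) : RelProj P ↔ Contractible P := by
  refine ⟨fun hP => ?_, relProj_of_contractible⟩
  obtain ⟨K, Q, f, g, hQ, hfg⟩ := exists_degSplitSES_from_contractible P
  obtain ⟨k, hk⟩ := hP f g hfg (𝟙 P)
  exact hQ.of_retract k g hk

lemma relInj_iff_contractible (I : CochainComplex A ℤ) : RelInj I ↔ Contractible I := by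
  refine ⟨fun hI => ?_, relInj_of_contractible⟩
  obtain ⟨J, K, f, g, hJ, hfg⟩ := exists_degSplitSES_into_contractible I
  obtain ⟨k, hk⟩ := hI f g hfg (𝟙 I)
  exact hJ.of_retract f k hk

/-- the category of cochain complexes with the degreewise split
exact structure is Frobenius: projectives = injectives = contractible complexes,
and there are enough of both. -/
theorem stmt13 :
    (∀ P : CochainComplex A ℤ, RelProj P ↔ Contractible P) ∧
    (∀ I : CochainComplex A ℤ, RelInj I ↔ Contractible I) ∧
    (∀ X : CochainComplex A ℤ, ∃ (K P : CochainComplex A ℤ) (f : K ⟶ P) (g : P ⟶ X),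
      Contractible P ∧ DegSplitSES f g) ∧
    (∀ X : CochainComplex A ℤ, ∃ (I K : CochainComplex A ℤ) (f : X ⟶ I) (g : I ⟶ K),
      Contractible I ∧ DegSplitSES f g) :=
  ⟨relProj_iff_contractible, relInj_iff_contractible, exists_degSplitSES_from_contractible,
    exists_degSplitSES_into_contractible⟩
end
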